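/- arXiv:1210.0771 — 3 statements merged into one kernel-verified Lean document; each statement's English description precedes it below -/
import Mathlib

section
/- Let f be a 1-periodic function in L²([0,1]) with Fourier coefficients c_k = ∫₀¹ f(t) e^{−2πikt} dt satisfying c₁ ≠ 0, let 0 < κ < 1/8, let k₀ ≥ 1 be an integer, and let θ₁*,…,θ_J* ∈ [−κ/2, κ/2]. Then for every θ = (θ₁,…,θ_J) ∈ Θ_κ one has M(θ₁,…,θ_J) − M(θ₁⁰,…,θ_J⁰) ≥ C(f,κ) · (1/J) Σ_{j=1}^J |θ_j − θ_j⁰|², where C(f,κ) = 4π²|c₁|² cos(4πκ) > 0. In particular M has a unique minimum over Θ_κ, attained at θ⁰, with M(θ⁰) = 0. -/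
/-!
Only the first harmonic is needed. `M(θ)` is at least `|c₁|²` times the circular variance
`(1/J) ∑_j |u_j - ū|²` of `u_j = e^{2πiφ_j}`, `φ_j = θ_j - θ_j*`, while at `θ⁰` all shifts
`φ_j` coincide, so every term of `M(θ⁰)` vanishes. Any variance equals `1/(2J²)` times the sum
of the pairwise squared distances, and `|u_j - u_{j'}|² = 2(1 - cos x)` with
`x = 2π(φ_j - φ_{j'})`, `|x| ≤ 4πκ`; this is at least `x² cos(4πκ)` since
`1 - cos x = 2 sin²(x/2) ≥ (x²/2) cos²(x/2) = (x²/4)(1 + cos x)`. On `Θ_κ` the centred shifts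
`φ_j - φ̄` are exactly `θ_j - θ_j⁰`.
-/

open MeasureTheory ProbabilityTheory Real Finset
open scoped ENNReal NNReal

noncomputable section

/-- `2πi` as a complex number. -/
def twoPiI : ℂ := 2 * Real.pi * Complex.I

/-- The complex exponential `e^{2πikx}`. -/
def eK (k : ℤ) (x : ℝ) : ℂ := Complex.exp (twoPiI * k * x)

/-- The `k`-th Fourier coefficient `c_k = ∫₀¹ f(t) e^{-2πikt} dt` of `f : ℝ → ℝ`. -/
def fc (f : ℝ → ℝ) (k : ℤ) : ℂ :=
  ∫ t in (0:ℝ)..1, (f t : ℂ) * Complex.exp (-(twoPiI) * k * t)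

/-- The Sobolev-type ball `W̃_s(A, c_*)` of 1-periodic functions in `L²([0,1])` with
`∑ (1+|k|^{2s}) |c_k|² ≤ A²` and `|c₁| ≥ c_*`. -/
def sobolevBall (s A cstar : ℝ) : Set (ℝ → ℝ) :=
  { f | Function.Periodic f 1 ∧ Measurable f ∧
        MemLp f 2 (volume.restrict (Set.Ioc (0:ℝ) 1)) ∧
        Summable (fun k : ℤ => (1 + |(k:ℝ)| ^ (2*s)) * ‖fc f k‖ ^ 2) ∧
        (∑' k : ℤ, (1 + |(k:ℝ)| ^ (2*s)) * ‖fc f k‖ ^ 2) ≤ A ^ 2 ∧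
        cstar ≤ ‖fc f 1‖ }

/-- The constraint set `Θ_κ = { θ ∈ [-κ/2, κ/2]^J : ∑_j θ_j = 0 }`. -/
def ThetaK (κ : ℝ) (J : ℕ) : Set (Fin J → ℝ) :=
  { θ | (∀ j, θ j ∈ Set.Icc (-(κ/2)) (κ/2)) ∧ ∑ j, θ j = 0 }

/-- The centered shifts `θ_j⁰ = θ_j* - (1/J) ∑_{j'} θ_{j'}*`. -/
def theta0 (J : ℕ) (θstar : Fin J → ℝ) : Fin J → ℝ :=
  fun j => θstar j - (J:ℝ)⁻¹ * ∑ j', θstar j'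

/-- The population criterion
`M(θ) = (1/J) ∑_j ∑_{|k|≤k₀} | c_k e^{2πik(θ_j-θ_j*)} - (1/J) ∑_{j'} c_k e^{2πik(θ_{j'}-θ_{j'}*)} |²`. -/
def Mpop (f : ℝ → ℝ) (k0 J : ℕ) (θstar : Fin J → ℝ) (θ : Fin J → ℝ) : ℝ :=
  (J:ℝ)⁻¹ * ∑ j : Fin J, ∑ k ∈ Finset.Icc (-(k0:ℤ)) (k0:ℤ),
    ‖fc f k * eK k (θ j - θstar j)
      - (J:ℂ)⁻¹ * ∑ j' : Fin J, fc f k * eK k (θ j' - θstar j')‖ ^ 2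

lemma mul_cos_le_sin {y : ℝ} (h0 : 0 ≤ y) (h : y ≤ π / 2) : y * cos y ≤ sin y := by
  rcases h.lt_or_eq with h | rfl
  · have hcos : 0 < cos y := cos_pos_of_mem_Ioo ⟨by linarith [pi_pos], h⟩
    have := le_tan h0 h
    rwa [tan_eq_sin_div_cos, le_div_iff₀ hcos] at this
  · simp

lemma sq_mul_one_add_cos_le_four_mul_one_sub_cos {x : ℝ} (h0 : 0 ≤ x) (h : x ≤ π) :
    x ^ 2 * (1 + cos x) ≤ 4 * (1 - cos x) := by
  have hy := mul_cos_le_sin (y := x / 2) (by linarith) (by linarith)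
  have hy0 : 0 ≤ x / 2 * cos (x / 2) :=
    mul_nonneg (by linarith) (cos_nonneg_of_mem_Icc ⟨by linarith [pi_pos], by linarith⟩)
  have hcos : cos x = 2 * cos (x / 2) ^ 2 - 1 := by rw [← cos_two_mul]; ring_nf
  have hsin : sin (x / 2) ^ 2 = 1 - cos (x / 2) ^ 2 := sin_sq _
  nlinarith [mul_le_mul hy hy hy0 (hy0.trans hy)]

lemma sq_div_two_mul_cos_le_one_sub_cos {x c : ℝ} (hxc : |x| ≤ c) (hc : c ≤ π) :
    x ^ 2 / 2 * cos c ≤ 1 - cos x := by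
  rw [← cos_abs x, ← sq_abs x]
  have hmono : cos c ≤ cos |x| :=
    cos_le_cos_of_nonneg_of_le_pi (abs_nonneg x) hc hxc
  nlinarith [sq_mul_one_add_cos_le_four_mul_one_sub_cos (abs_nonneg x) (hxc.trans hc), cos_le_one c, sq_nonneg |x|]

lemma eK_eq (k : ℤ) (x : ℝ) : eK k x = Complex.exp (↑(2 * π * k * x) * Complex.I) := by
  simp only [eK, twoPiI]
  push_cast
  ring_nf

lemma norm_eK_sub_sq (k : ℤ) (a b : ℝ) :
    ‖eK k a - eK k b‖ ^ 2 = 2 * (1 - cos (2 * π * k * (a - b))) := by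
  rw [eK_eq, eK_eq, Complex.sq_norm, Complex.normSq_apply]
  simp only [Complex.sub_re, Complex.sub_im, Complex.exp_ofReal_mul_I_re,
    Complex.exp_ofReal_mul_I_im]
  rw [show 2 * π * k * (a - b) = 2 * π * k * a - 2 * π * k * b by ring, cos_sub]
  nlinarith [sin_sq_add_cos_sq (2 * π * k * a), sin_sq_add_cos_sq (2 * π * k * b)]

lemma sq_mul_cos_le_norm_eK_sub_sq {a b r : ℝ} (hab : |a - b| ≤ r) (hr : r ≤ 1 / 2) :
    (2 * π * (a - b)) ^ 2 * cos (2 * π * r) ≤ ‖eK 1 a - eK 1 b‖ ^ 2 := by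
  have hx : |2 * π * (a - b)| ≤ 2 * π * r := by
    rw [abs_mul, abs_of_pos (by positivity)]
    exact mul_le_mul_of_nonneg_left hab (by positivity)
  have := sq_div_two_mul_cos_le_one_sub_cos hx (by nlinarith [pi_pos])
  rw [norm_eK_sub_sq, Int.cast_one, mul_one]
  linarith

section PairwiseVariance

variable {ι E : Type*} [NormedAddCommGroup E] [InnerProductSpace ℝ E] (s : Finset ι) (v : ι → E)

lemma sum_sum_norm_sub_sq :
    ∑ i ∈ s, ∑ j ∈ s, ‖v i - v j‖ ^ 2 = 2 * (#s * ∑ i ∈ s, ‖v i‖ ^ 2 - ‖∑ i ∈ s, v i‖ ^ 2) := by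
  simp only [norm_sub_sq_real, Finset.sum_add_distrib, Finset.sum_sub_distrib, ← Finset.mul_sum,
    ← inner_sum, ← sum_inner, real_inner_self_eq_norm_sq, Finset.sum_const, nsmul_eq_mul]
  ring

lemma sum_sum_norm_sub_sq_eq_sum_norm_sub_average_sq :
    ∑ i ∈ s, ∑ j ∈ s, ‖v i - v j‖ ^ 2
      = 2 * #s * ∑ i ∈ s, ‖v i - (#s : ℝ)⁻¹ • ∑ j ∈ s, v j‖ ^ 2 := by
  rcases s.eq_empty_or_nonempty with rfl | hs
  · simp
  set w := fun i => v i - (#s : ℝ)⁻¹ • ∑ j ∈ s, v j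
  have hw : ∑ i ∈ s, w i = 0 := by
    simp only [w, Finset.sum_sub_distrib, Finset.sum_const, ← Nat.cast_smul_eq_nsmul ℝ, smul_smul,
      mul_inv_cancel₀ (Nat.cast_ne_zero.mpr hs.card_pos.ne' : (#s : ℝ) ≠ 0), one_smul, sub_self]
  have hdiff : ∀ i j, v i - v j = w i - w j := fun i j => by simp only [w]; abel
  simp only [hdiff, sum_sum_norm_sub_sq s w, hw, norm_zero]
  ring

end PairwiseVariance

lemma variance_le_circular_variance {ι : Type*} (s : Finset ι) (φ : ι → ℝ) {r : ℝ}
    (hφ : ∀ i ∈ s, ∀ j ∈ s, |φ i - φ j| ≤ r) (hr : r ≤ 1 / 2) :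
    4 * π ^ 2 * cos (2 * π * r) * ∑ i ∈ s, (φ i - (#s : ℝ)⁻¹ * ∑ j ∈ s, φ j) ^ 2
      ≤ ∑ i ∈ s, ‖eK 1 (φ i) - (#s : ℂ)⁻¹ * ∑ j ∈ s, eK 1 (φ j)‖ ^ 2 := by
  rcases s.eq_empty_or_nonempty with rfl | hs
  · simp
  have hpair : ∑ i ∈ s, ∑ j ∈ s, (2 * π * (φ i - φ j)) ^ 2 * cos (2 * π * r)
      ≤ ∑ i ∈ s, ∑ j ∈ s, ‖eK 1 (φ i) - eK 1 (φ j)‖ ^ 2 :=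
    Finset.sum_le_sum fun i hi => Finset.sum_le_sum fun j hj =>
      sq_mul_cos_le_norm_eK_sub_sq (hφ i hi j hj) hr
  have hreal := sum_sum_norm_sub_sq_eq_sum_norm_sub_average_sq s φ
  have hcpx := sum_sum_norm_sub_sq_eq_sum_norm_sub_average_sq s (fun i => eK 1 (φ i))
  simp only [Real.norm_eq_abs, sq_abs, smul_eq_mul] at hreal
  simp only [Complex.real_smul, Complex.ofReal_inv, Complex.ofReal_natCast] at hcpx
  have hlhs : ∑ i ∈ s, ∑ j ∈ s, (2 * π * (φ i - φ j)) ^ 2 * cos (2 * π * r)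
      = 2 * #s * (4 * π ^ 2 * cos (2 * π * r)
          * ∑ i ∈ s, (φ i - (#s : ℝ)⁻¹ * ∑ j ∈ s, φ j) ^ 2) := by
    have : ∀ i j, (2 * π * (φ i - φ j)) ^ 2 * cos (2 * π * r)
        = 4 * π ^ 2 * cos (2 * π * r) * (φ i - φ j) ^ 2 := fun i j => by ring
    simp only [this, ← Finset.mul_sum, hreal]
    ring
  rw [hlhs, hcpx] at hpair
  exact le_of_mul_le_mul_left hpair (by positivity)

lemma Mpop_theta0 (f : ℝ → ℝ) (k0 J : ℕ) (θstar : Fin J → ℝ) :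
    Mpop f k0 J θstar (theta0 J θstar) = 0 := by
  rcases J.eq_zero_or_pos with rfl | hJ
  · simp [Mpop]
  have hshift : ∀ j, theta0 J θstar j - θstar j = -((J : ℝ)⁻¹ * ∑ j', θstar j') := fun j => by
    simp only [theta0]; ring
  have hJ' : (J : ℂ) ≠ 0 := Nat.cast_ne_zero.mpr hJ.ne'
  simp [Mpop, hshift, inv_mul_cancel_left₀ hJ']

lemma first_harmonic_le_Mpop (f : ℝ → ℝ) {k0 : ℕ} (hk0 : 1 ≤ k0) (J : ℕ) (θstar θ : Fin J → ℝ) :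
    ‖fc f 1‖ ^ 2 * ((J : ℝ)⁻¹ * ∑ j, ‖eK 1 (θ j - θstar j)
        - (J : ℂ)⁻¹ * ∑ j', eK 1 (θ j' - θstar j')‖ ^ 2)
      ≤ Mpop f k0 J θstar θ := by
  have h1 : (1 : ℤ) ∈ Finset.Icc (-(k0 : ℤ)) k0 := Finset.mem_Icc.mpr ⟨by omega, by omega⟩
  rw [Mpop, mul_left_comm, Finset.mul_sum]
  gcongr with j
  calc ‖fc f 1‖ ^ 2 * ‖eK 1 (θ j - θstar j) - (J : ℂ)⁻¹ * ∑ j', eK 1 (θ j' - θstar j')‖ ^ 2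
      = ‖fc f 1 * eK 1 (θ j - θstar j)
          - (J : ℂ)⁻¹ * ∑ j', fc f 1 * eK 1 (θ j' - θstar j')‖ ^ 2 := by
        rw [← Finset.mul_sum, ← mul_pow, ← norm_mul]
        ring_nf
    _ ≤ _ := Finset.single_le_sum (f := fun k : ℤ => ‖fc f k * eK k (θ j - θstar j)
          - (J : ℂ)⁻¹ * ∑ j', fc f k * eK k (θ j' - θstar j')‖ ^ 2)
        (fun _ _ => by positivity) h1

lemma quadratic_le_Mpop (f : ℝ → ℝ) {κ : ℝ} (hκ' : κ < 1 / 8) {k0 : ℕ} (hk0 : 1 ≤ k0) {J : ℕ}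
    {θstar : Fin J → ℝ} (hθstar : ∀ j, θstar j ∈ Set.Icc (-(κ / 2)) (κ / 2))
    {θ : Fin J → ℝ} (hθ : θ ∈ ThetaK κ J) :
    4 * π ^ 2 * ‖fc f 1‖ ^ 2 * cos (4 * π * κ) * ((J : ℝ)⁻¹ * ∑ j, (θ j - theta0 J θstar j) ^ 2)
      ≤ Mpop f k0 J θstar θ := by
  obtain ⟨hθmem, hθsum⟩ := hθ
  have hpair : ∀ i j, |(θ i - θstar i) - (θ j - θstar j)| ≤ 2 * κ := fun i j => by
    obtain ⟨hi, hi'⟩ := hθmem i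
    obtain ⟨hj, hj'⟩ := hθmem j
    obtain ⟨hsi, hsi'⟩ := hθstar i
    obtain ⟨hsj, hsj'⟩ := hθstar j
    exact abs_le.mpr ⟨by linarith, by linarith⟩
  have hcentre : ∀ i, (θ i - θstar i) - (J : ℝ)⁻¹ * ∑ j, (θ j - θstar j)
      = θ i - theta0 J θstar i := fun i => by
    simp only [theta0, Finset.sum_sub_distrib, hθsum]; ring
  have hvar := variance_le_circular_variance Finset.univ (fun i => θ i - θstar i)
    (fun i _ j _ => hpair i j) (by linarith)
  simp only [Finset.card_univ, Fintype.card_fin, hcentre] at hvar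
  calc 4 * π ^ 2 * ‖fc f 1‖ ^ 2 * cos (4 * π * κ) * ((J : ℝ)⁻¹ * ∑ j, (θ j - theta0 J θstar j) ^ 2)
      = ‖fc f 1‖ ^ 2 * ((J : ℝ)⁻¹
          * (4 * π ^ 2 * cos (2 * π * (2 * κ)) * ∑ j, (θ j - theta0 J θstar j) ^ 2)) := by
        ring_nf
    _ ≤ _ := by gcongr
    _ ≤ Mpop f k0 J θstar θ := first_harmonic_le_Mpop f hk0 J θstar θ

theorem population_criterion_quadratic_lower_bound_general
    (f : ℝ → ℝ)
    (hc1 : fc f 1 ≠ 0)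
    (κ : ℝ) (hκ : 0 < κ) (hκ' : κ < 1/8)
    (k0 J : ℕ) (hk0 : 1 ≤ k0)
    (θstar : Fin J → ℝ) (hθstar : ∀ j, θstar j ∈ Set.Icc (-(κ/2)) (κ/2)) :
    (0 < 4 * Real.pi^2 * ‖fc f 1‖^2 * Real.cos (4 * Real.pi * κ)) ∧
    (∀ θ ∈ ThetaK κ J,
      4 * Real.pi^2 * ‖fc f 1‖^2 * Real.cos (4 * Real.pi * κ)
          * ((J:ℝ)⁻¹ * ∑ j, (θ j - theta0 J θstar j) ^ 2)
        ≤ Mpop f k0 J θstar θ - Mpop f k0 J θstar (theta0 J θstar)) ∧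
    Mpop f k0 J θstar (theta0 J θstar) = 0 ∧
    (∀ θ ∈ ThetaK κ J, θ ≠ theta0 J θstar →
      Mpop f k0 J θstar (theta0 J θstar) < Mpop f k0 J θstar θ) := by
  have hC : 0 < 4 * π ^ 2 * ‖fc f 1‖ ^ 2 * cos (4 * π * κ) := by
    have hcos : 0 < cos (4 * π * κ) :=
      cos_pos_of_mem_Ioo ⟨by nlinarith [pi_pos], by nlinarith [pi_pos]⟩
    have hc1' := norm_pos_iff.mpr hc1
    positivity
  refine ⟨hC, fun θ hθ => ?_, Mpop_theta0 f k0 J θstar, fun θ hθ hne => ?_⟩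
  · rw [Mpop_theta0, sub_zero]
    exact quadratic_le_Mpop f hκ' hk0 hθstar hθ
  · obtain ⟨j, hj⟩ := Function.ne_iff.mp hne
    have hJ : (0 : ℝ) < J := Nat.cast_pos.mpr j.pos
    have hsq : 0 < ∑ i, (θ i - theta0 J θstar i) ^ 2 :=
      Finset.sum_pos' (fun i _ => sq_nonneg _) ⟨j, Finset.mem_univ j, by
        have := sub_ne_zero.mpr hj; positivity⟩
    rw [Mpop_theta0]
    exact (mul_pos hC (mul_pos (inv_pos.mpr hJ) hsq)).trans_le
      (quadratic_le_Mpop f hκ' hk0 hθstar hθ)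

/-- **Proposition (quadratic lower bound and uniqueness of the minimizer of `M`).**
If `f` is 1-periodic, in `L²([0,1])`, with `c₁ ≠ 0`, `0 < κ < 1/8`, `k₀ ≥ 1` and
`θ₁*,…,θ_J* ∈ [-κ/2, κ/2]`, then with `C(f,κ) = 4π²|c₁|² cos(4πκ) > 0` one has
`M(θ) - M(θ⁰) ≥ C(f,κ) (1/J) ∑_j |θ_j - θ_j⁰|²` for every `θ ∈ Θ_κ`; in particular
`M(θ⁰) = 0` and `M` has a unique minimum over `Θ_κ`, attained at `θ⁰`. -/
theorem population_criterion_quadratic_lower_bound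
    (f : ℝ → ℝ) (hper : Function.Periodic f 1) (hmeas : Measurable f)
    (hL2 : MemLp f 2 (volume.restrict (Set.Ioc (0:ℝ) 1)))
    (hc1 : fc f 1 ≠ 0)
    (κ : ℝ) (hκ : 0 < κ) (hκ' : κ < 1/8)
    (k0 J : ℕ) (hk0 : 1 ≤ k0)
    (θstar : Fin J → ℝ) (hθstar : ∀ j, θstar j ∈ Set.Icc (-(κ/2)) (κ/2)) :
    (0 < 4 * Real.pi^2 * ‖fc f 1‖^2 * Real.cos (4 * Real.pi * κ)) ∧
    (∀ θ ∈ ThetaK κ J,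
      4 * Real.pi^2 * ‖fc f 1‖^2 * Real.cos (4 * Real.pi * κ)
          * ((J:ℝ)⁻¹ * ∑ j, (θ j - theta0 J θstar j) ^ 2)
        ≤ Mpop f k0 J θstar θ - Mpop f k0 J θstar (theta0 J θstar)) ∧
    Mpop f k0 J θstar (theta0 J θstar) = 0 ∧
    (∀ θ ∈ ThetaK κ J, θ ≠ theta0 J θstar →
      Mpop f k0 J θstar (theta0 J θstar) < Mpop f k0 J θstar θ) :=
  population_criterion_quadratic_lower_bound_general f hc1 κ hκ hκ' k0 J hk0 θstar hθstar
end
end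

section
/- Let f ∈ W̃_s(A,c_*) with s > 1/2 be given by its (everywhere convergent) Fourier series. Then there exists a constant A₀ > 0 depending only on A and s such that for every even n = 2N with N ≥ 2, every θ_j* ∈ [−1/2,1/2], every j and both p ∈ {0,1}: max_{−N/2 ≤ k < N/2} | c̄^{(p)}_{k,j} − c_k e^{−2iπk θ_j*} | ≤ A₀ N^{−s+1/2}, where c̄^{(p)}_{k,j} = (1/N) Σ_{q=1}^N f(t_q^{(p)} − θ_j*) e^{−2πik t_q^{(p)}}. -/
/-!
Substituting the Fourier series of `f` into the Riemann sum `c̄` gives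
`c̄ = ∑ₘ cₘ e^{-2πimθ} εₘ₋ₖ`, where the grid average `ε_d = gridExpMean N p d` of `e^{2πidt}`
is a geometric sum: it vanishes unless `N ∣ d`, equals `1` at `d = 0`, and has modulus at most
`1`. Hence the error is at most the aliased tail `∑_{l ≠ 0} |c_{k+lN}|`. For `|k| ≤ N/2` one has
`|k + lN| ≥ N|l|/2`, so Cauchy–Schwarz against the Sobolev weights bounds the tail by
`A (N/2)^{-s} (∑_{l ≠ 0} |l|^{-2s})^{1/2}`, which is finite because `2s > 1`.
-/

open MeasureTheory ProbabilityTheory Real Finset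
open scoped ENNReal NNReal

noncomputable section

/-- The design points `t_q^{(p)} = (2q - p)/n`, `q = 1,…,N`, `n = 2N`, `p ∈ {0,1}`. -/
def tpt (N : ℕ) (p : ℕ) (q : Fin N) : ℝ := ((2 * (q.1 + 1) : ℕ) - (p:ℝ)) / (2 * N)

/-- The noiseless discrete Fourier coefficients
`c̄^{(p)}_{k,j} = (1/N) ∑_{q=1}^N f(t_q^{(p)} - θ_j*) e^{-2πik t_q^{(p)}}`. -/
def cbar (f : ℝ → ℝ) (N J : ℕ) (p : ℕ) (θstar : Fin J → ℝ) (k : ℤ) (j : Fin J) : ℂ :=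
  (N:ℂ)⁻¹ * ∑ q : Fin N, ((f (tpt N p q - θstar j) : ℝ) : ℂ)
    * Complex.exp (-(twoPiI) * k * tpt N p q)

def gridExpMean (N p : ℕ) (d : ℤ) : ℂ :=
  (N : ℂ)⁻¹ * ∑ q : Fin N, Complex.exp (twoPiI * d * tpt N p q)

lemma gridExpMean_zero {N : ℕ} (hN : N ≠ 0) (p : ℕ) : gridExpMean N p 0 = 1 := by
  simp [gridExpMean, hN]

lemma norm_gridExpMean_le (N p : ℕ) (d : ℤ) : ‖gridExpMean N p d‖ ≤ 1 := by
  have hterm : ∀ q : Fin N, ‖Complex.exp (twoPiI * d * tpt N p q)‖ = 1 := fun q => by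
    simp [Complex.norm_exp, twoPiI]
  calc ‖gridExpMean N p d‖ ≤ (N : ℝ)⁻¹ * ∑ q : Fin N, ‖Complex.exp (twoPiI * d * tpt N p q)‖ := by
        rw [gridExpMean, norm_mul, norm_inv, Complex.norm_natCast]
        gcongr
        exact norm_sum_le _ _
    _ ≤ 1 := by
        simp only [hterm, Finset.sum_const, Finset.card_univ, Fintype.card_fin, nsmul_eq_mul, mul_one]
        exact inv_mul_le_one_of_le₀ le_rfl (Nat.cast_nonneg N)

lemma gridExpMean_eq_zero {N p : ℕ} {d : ℤ} (hd : ¬ (N : ℤ) ∣ d) : gridExpMean N p d = 0 := by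
  rcases eq_or_ne N 0 with rfl | hN
  · simp [gridExpMean]
  have hζ := Complex.isPrimitiveRoot_exp N hN
  set ω := Complex.exp (2 * π * Complex.I / N) ^ d with hω
  have hω1 : ω ≠ 1 := fun h => hd ((hζ.zpow_eq_one_iff_dvd d).1 h)
  have hωN : ω ^ N = 1 := by
    rw [hω, ← zpow_natCast, ← zpow_mul, mul_comm d, zpow_mul, zpow_natCast, hζ.pow_eq_one, one_zpow]
  have hterm : ∀ q : Fin N, Complex.exp (twoPiI * d * tpt N p q)
      = Complex.exp (-(twoPiI * d * p / (2 * N))) * (ω * ω ^ q.1) := fun q => by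
    rw [hω, ← Complex.exp_int_mul, ← pow_succ', ← Complex.exp_nat_mul, ← Complex.exp_add]
    congr 1
    simp only [twoPiI, tpt]
    push_cast
    ring
  simp only [gridExpMean, hterm, ← Finset.mul_sum, Fin.sum_univ_eq_sum_range (fun i => ω ^ i),
    geom_sum_eq hω1, hωN, sub_self, zero_div, mul_zero]

lemma hasSum_cbar {f : ℝ → ℝ} {c : ℤ → ℂ} (hf : ∀ t, HasSum (fun m => c m * eK m t) (f t))
    (N J p : ℕ) (θstar : Fin J → ℝ) (k : ℤ) (j : Fin J) :
    HasSum (fun m => c m * Complex.exp (-twoPiI * m * θstar j) * gridExpMean N p (m - k))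
      (cbar f N J p θstar k j) := by
  have hsum := (hasSum_sum fun q (_ : q ∈ Finset.univ) =>
    (hf (tpt N p q - θstar j)).mul_right (Complex.exp (-twoPiI * k * tpt N p q))).mul_left (N : ℂ)⁻¹
  refine hsum.congr_fun fun m => ?_
  have hphase : ∀ q : Fin N, eK m (tpt N p q - θstar j) * Complex.exp (-twoPiI * k * tpt N p q)
      = Complex.exp (-twoPiI * m * θstar j) * Complex.exp (twoPiI * ↑(m - k) * tpt N p q) :=
    fun q => by
      rw [eK, ← Complex.exp_add, ← Complex.exp_add]
      push_cast
      ring_nf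
  simp only [gridExpMean, Finset.mul_sum]
  refine Finset.sum_congr rfl fun q _ => ?_
  rw [mul_assoc (c m) (eK _ _), hphase]
  ring

lemma HasSum.comp_add_mul_of_eq_zero {G : Type*} [AddCommMonoid G] [TopologicalSpace G]
    {h : ℤ → G} {a : G} (hh : HasSum h a) {N : ℤ} (hN : N ≠ 0) (k : ℤ)
    (hsupp : ∀ m, ¬ N ∣ m - k → h m = 0) :
    HasSum (fun l => h (k + l * N)) a := by
  refine (Function.Injective.hasSum_iff (g := fun l => k + l * N) ?_ ?_).2 hh
  · intro a b hab
    simpa [hN] using hab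
  · rintro m hm
    refine hsupp m fun ⟨l, hl⟩ => hm ⟨l, ?_⟩
    simp only
    linarith [mul_comm l N]

lemma norm_cbar_sub_le {f : ℝ → ℝ} {c : ℤ → ℂ} (hf : ∀ t, HasSum (fun m => c m * eK m t) (f t))
    {N : ℕ} (hN : N ≠ 0) (J p : ℕ) (θstar : Fin J → ℝ) (k : ℤ) (j : Fin J) {b : ℝ}
    (hb : HasSum (Function.update (fun l : ℤ => ‖c (k + l * N)‖) 0 0) b) :
    ‖cbar f N J p θstar k j - c k * Complex.exp (-twoPiI * k * θstar j)‖ ≤ b := by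
  set h : ℤ → ℂ := fun m => c m * Complex.exp (-twoPiI * m * θstar j) * gridExpMean N p (m - k)
  have hlat : HasSum (fun l : ℤ => h (k + l * N)) (cbar f N J p θstar k j) :=
    (hasSum_cbar hf N J p θstar k j).comp_add_mul_of_eq_zero (by exact_mod_cast hN) k
      fun m hm => by simp [gridExpMean_eq_zero hm]
  have herr := hlat.update 0 0
  simp only [zero_mul, add_zero, h, sub_self, gridExpMean_zero hN, mul_one, zero_sub,
    neg_add_eq_sub] at herr
  refine herr.norm_le_of_bounded hb fun l => ?_
  rcases eq_or_ne l 0 with rfl | hl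
  · simp
  rw [Function.update_of_ne hl, Function.update_of_ne hl, norm_mul, norm_mul]
  calc _ ≤ ‖c (k + l * N)‖ * 1 * 1 := by
        gcongr
        · simp [Complex.norm_exp, twoPiI]
        · exact norm_gridExpMean_le N p _
    _ = _ := by ring

lemma half_mul_abs_le_abs_add_mul {N : ℕ} {k l : ℤ} (hk : 2 * |k| ≤ N) (hl : l ≠ 0) :
    (N : ℝ) / 2 * |(l : ℝ)| ≤ |((k + l * N : ℤ) : ℝ)| := by
  have hl1 : 1 ≤ |l| := Int.one_le_abs hl
  have htri : |l| * N - |k| ≤ |k + l * N| := by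
    have := abs_sub_abs_le_abs_sub (l * N) (-k)
    rw [abs_mul, abs_neg, sub_neg_eq_add, add_comm, Nat.abs_cast] at this
    exact this
  have hZ : (N : ℤ) * |l| ≤ 2 * |k + l * N| := by nlinarith
  have hR : ((N * |l| : ℤ) : ℝ) ≤ ((2 * |k + l * N| : ℤ) : ℝ) := by exact_mod_cast hZ
  push_cast at hR ⊢
  linarith

lemma one_le_sqrt_one_add_rpow_mul_rpow_neg {x y s : ℝ} (hs : 0 ≤ s) (hx : 0 < x)
    (hxy : x ≤ |y|) : 1 ≤ √(1 + |y| ^ (2 * s)) * x ^ (-s) := by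
  have hxs : 0 < x ^ s := Real.rpow_pos_of_pos hx s
  have hsqrt : x ^ s ≤ √(1 + |y| ^ (2 * s)) := calc
    x ^ s ≤ |y| ^ s := Real.rpow_le_rpow hx.le hxy hs
    _ = √(|y| ^ (2 * s)) := by
      rw [mul_comm, Real.rpow_mul (abs_nonneg _), Real.rpow_two, Real.sqrt_sq (by positivity)]
    _ ≤ √(1 + |y| ^ (2 * s)) := Real.sqrt_le_sqrt (by linarith)
  rw [Real.rpow_neg hx.le, ← div_eq_mul_inv, one_le_div hxs]
  exact hsqrt

lemma tsum_norm_aliases_le {c : ℤ → ℂ} {s A : ℝ} (hs : 1 / 2 < s) (hA : 0 ≤ A)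
    (hc : Summable fun m : ℤ => (1 + |(m : ℝ)| ^ (2 * s)) * ‖c m‖ ^ 2)
    (hcA : ∑' m : ℤ, (1 + |(m : ℝ)| ^ (2 * s)) * ‖c m‖ ^ 2 ≤ A ^ 2)
    {N : ℕ} (hN : N ≠ 0) {k : ℤ} (hk : 2 * |k| ≤ N) :
    Summable (Function.update (fun l : ℤ => ‖c (k + l * N)‖) 0 0) ∧
      ∑' l, Function.update (fun l : ℤ => ‖c (k + l * N)‖) 0 0 l
        ≤ A * ((N : ℝ) / 2) ^ (-s) * √(∑' l : ℤ, |(l : ℝ)| ^ (-(2 * s))) := by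
  set g := Function.update (fun l : ℤ => ‖c (k + l * N)‖) 0 0
  set w : ℤ → ℝ := fun m => (1 + |(m : ℝ)| ^ (2 * s)) * ‖c m‖ ^ 2
  set e : ℤ → ℤ := fun l => k + l * N
  have he : e.Injective := fun a b hab => by simpa [e, hN] using hab
  set u : ℤ → ℝ := fun l => √(1 + |(e l : ℝ)| ^ (2 * s)) * ‖c (e l)‖
  set v : ℤ → ℝ := fun l => |(l : ℝ)| ^ (-s)
  have hu : ∀ l, u l ^ (2 : ℝ) = w (e l) := fun l => by
    simp only [u, w, Real.rpow_two, mul_pow]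
    rw [Real.sq_sqrt (by positivity)]
  have hv : ∀ l, v l ^ (2 : ℝ) = |(l : ℝ)| ^ (-(2 * s)) := fun l => by
    simp only [v]
    rw [← Real.rpow_mul (abs_nonneg _)]
    ring_nf
  have hu2 : Summable fun l => u l ^ (2 : ℝ) := by
    exact (hc.comp_injective he).congr fun l => (hu l).symm
  have hv2 : Summable fun l => v l ^ (2 : ℝ) := by
    simpa only [hv] using Real.summable_abs_int_rpow (by linarith : 1 < 2 * s)
  have hg0 : ∀ l, 0 ≤ g l := fun l => by
    rcases eq_or_ne l 0 with rfl | hl <;> simp [g, *]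
  have hgle : ∀ l, g l ≤ ((N : ℝ) / 2) ^ (-s) * (u l * v l) := fun l => by
    rcases eq_or_ne l 0 with rfl | hl
    · simp only [g, Function.update_self]
      positivity
    have hone := one_le_sqrt_one_add_rpow_mul_rpow_neg (by linarith : 0 ≤ s)
      (by positivity : 0 < (N : ℝ) / 2 * |(l : ℝ)|) (half_mul_abs_le_abs_add_mul hk hl)
    rw [Real.mul_rpow (by positivity) (abs_nonneg _)] at hone
    calc g l = ‖c (e l)‖ := Function.update_of_ne hl _ _
      _ ≤ ‖c (e l)‖ * (√(1 + |(e l : ℝ)| ^ (2 * s)) * (((N : ℝ) / 2) ^ (-s) * v l)) :=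
        le_mul_of_one_le_right (norm_nonneg _) hone
      _ = _ := by ring
  have huv := Real.summable_mul_of_Lp_Lq_of_nonneg .two_two (fun l => by positivity)
    (fun l => by positivity) hu2 hv2
  have hg : Summable g := Summable.of_nonneg_of_le hg0 hgle (huv.mul_left _)
  have hU : (∑' l, u l ^ (2 : ℝ)) ^ (1 / 2 : ℝ) ≤ A := by
    rw [← Real.sqrt_eq_rpow, Real.sqrt_le_left hA]
    calc ∑' l, u l ^ (2 : ℝ) ≤ ∑' m, w m :=
          hu2.tsum_le_tsum_of_inj e he (fun m _ => by positivity) (fun l => (hu l).le) hc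
      _ ≤ A ^ 2 := hcA
  have hV : (∑' l, v l ^ (2 : ℝ)) ^ (1 / 2 : ℝ) = √(∑' l : ℤ, |(l : ℝ)| ^ (-(2 * s))) := by
    rw [tsum_congr hv, Real.sqrt_eq_rpow]
  refine ⟨hg, ?_⟩
  calc ∑' l, g l ≤ ∑' l, ((N : ℝ) / 2) ^ (-s) * (u l * v l) := hg.tsum_le_tsum hgle (huv.mul_left _)
    _ = ((N : ℝ) / 2) ^ (-s) * ∑' l, u l * v l := tsum_mul_left
    _ ≤ ((N : ℝ) / 2) ^ (-s) * (A * √(∑' l : ℤ, |(l : ℝ)| ^ (-(2 * s)))) := by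
      gcongr
      refine (Real.inner_le_Lp_mul_Lq_tsum_of_nonneg .two_two (fun l => by positivity)
        (fun l => by positivity) hu2 hv2).trans ?_
      rw [hV]
      gcongr
    _ = _ := by ring

/-- **Lemma (discrete vs. continuous Fourier coefficients).**
If `f ∈ W̃_s(A,c_*)` with `s > 1/2` is given by its everywhere convergent Fourier series, then
there is `A₀ > 0`, depending only on `A` and `s`, such that for every even `n = 2N` with `N ≥ 2`,
every `θ_j* ∈ [-1/2,1/2]`, every `j`, both `p ∈ {0,1}` and every `-N/2 ≤ k < N/2`:
`| c̄^{(p)}_{k,j} - c_k e^{-2πik θ_j*} | ≤ A₀ N^{-s+1/2}`. -/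
theorem discrete_fourier_coefficient_approximation
    (A s : ℝ) (hA : 0 < A) (hs : 1/2 < s) :
    ∃ A0 : ℝ, 0 < A0 ∧
      ∀ (cstar : ℝ) (f : ℝ → ℝ), f ∈ sobolevBall s A cstar →
      (∀ t : ℝ, Summable (fun k : ℤ => fc f k * eK k t) ∧
        ((f t : ℂ) = ∑' k : ℤ, fc f k * eK k t)) →
      ∀ (N J : ℕ), 2 ≤ N →
      ∀ θstar : Fin J → ℝ, (∀ j, θstar j ∈ Set.Icc (-(1:ℝ)/2) (1/2)) →
      ∀ (j : Fin J) (p : ℕ), p ≤ 1 →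
      ∀ k : ℤ, -(N:ℤ) ≤ 2*k → 2*k < (N:ℤ) →
      ‖cbar f N J p θstar k j - fc f k * Complex.exp (-(twoPiI) * k * (θstar j : ℝ))‖
        ≤ A0 * (N:ℝ) ^ (-s + 1/2) := by
  -- `|0| ^ (-(2 * s)) = 0`, so `Z` is the sum over `l ≠ 0`.
  set Z := ∑' l : ℤ, |(l : ℝ)| ^ (-(2 * s))
  have hZ : 0 < Z :=
    (Real.summable_abs_int_rpow (by linarith)).tsum_pos (fun _ => by positivity) 1 (by simp)
  refine ⟨A * 2 ^ s * √Z, by positivity, ?_⟩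
  rintro cstar f ⟨-, -, -, hw, hwA, -⟩ hrep N J hN θstar - j p - k hk₁ hk₂
  have hfourier : ∀ t, HasSum (fun m => fc f m * eK m t) (f t) := fun t => by
    rw [(hrep t).2]
    exact (hrep t).1.hasSum
  have hk : 2 * |k| ≤ N := by rcases abs_cases k with ⟨h, -⟩ | ⟨h, -⟩ <;> omega
  obtain ⟨hg, hgle⟩ := tsum_norm_aliases_le hs hA.le hw hwA (by omega) hk
  have hN' : (1 : ℝ) ≤ N := by exact_mod_cast (by omega : 1 ≤ N)
  calc _ ≤ _ := norm_cbar_sub_le hfourier (by omega) J p θstar k j hg.hasSum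
    _ ≤ A * ((N : ℝ) / 2) ^ (-s) * √Z := hgle
    _ = A * 2 ^ s * √Z * (N : ℝ) ^ (-s) := by
      rw [Real.div_rpow (by positivity) zero_le_two, Real.rpow_neg zero_le_two]
      field_simp
    _ ≤ A * 2 ^ s * √Z * (N : ℝ) ^ (-s + 1 / 2) :=
      mul_le_mul_of_nonneg_left (Real.rpow_le_rpow_of_exponent_le hN' (by linarith)) (by positivity)
end
end

section
/- Let f be a 1-periodic function in L²([0,1]) with Fourier coefficients c_k, let k₀ ≥ 1 and θ₁*,…,θ_J* ∈ ℝ. Then the Hessian of M at θ⁰ is the matrix ∇²M(θ⁰) = (8π²/J) ( Σ_{|k|≤k₀} k² |c_k|² ) ( I_J − (1/J) 𝟙_J ), where I_J is the J×J identity matrix and 𝟙_J the J×J all-ones matrix. Consequently, for every v ∈ ℝ^J with Σ_{j=1}^J v_j = 0, ‖∇²M(θ⁰) v‖ = (8π²/J) ( Σ_{|k|≤k₀} k² |c_k|² ) ‖v‖; in particular, if |c₁| ≥ c_* > 0 then ‖∇²M(θ⁰) v‖² ≥ (64π⁴ c_*⁴ / J²) ‖v‖² for every such v. -/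
open MeasureTheory ProbabilityTheory Real Finset
open scoped ENNReal NNReal

noncomputable section

/-- The Hessian matrix of a function `F : ℝ^J → ℝ`, with entries
`(∇²F(θ))_{i,j} = ∂²F/∂θ_i∂θ_j (θ)`. -/
def hess {J : ℕ} (F : (Fin J → ℝ) → ℝ) (θ : Fin J → ℝ) : Fin J → Fin J → ℝ :=
  fun i j => fderiv ℝ (fun x => fderiv ℝ F x (Pi.single j 1)) θ (Pi.single i 1)

/-- The operator norm of a `J × J` real matrix w.r.t. the Euclidean norm:
`‖B‖_op = sup_{‖v‖ ≤ 1} ‖Bv‖`. -/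
def opNorm {J : ℕ} (B : Fin J → Fin J → ℝ) : ℝ :=
  sSup ((fun v : Fin J → ℝ => Real.sqrt (∑ i, (∑ j, B i j * v j) ^ 2))
        '' {v : Fin J → ℝ | ∑ j, v j ^ 2 ≤ 1})

/-!
The variance identity `∑ⱼ ‖zⱼ - z̄‖² = ∑ⱼ ‖zⱼ‖² - J ‖z̄‖²`, applied to `zⱼ = c_k e^{2πik(θⱼ - θⱼ*)}`,
writes `M(θ)` as the constant `∑_k |c_k|²` minus `∑_k |c_k|²/J² ∑_{a,b} cos(2πk(δ_a - δ_b))`,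
`δ = θ - θ*`: a finite sum of cosines of linear forms `L`. The Hessian of `cos ∘ L` is
`-cos(L ·) L ⊗ L`, and at `θ⁰` the vector `δ` is constant, so every cosine equals `1` and the
Hessian is `(4π²/J²) ∑_k k²|c_k|² ∑_{a,b} (e_a - e_b)(e_a - e_b)ᵀ` with
`∑_{a,b} (e_a - e_b)(e_a - e_b)ᵀ = 2 (J I - 𝟙)`. On `∑ⱼ vⱼ = 0` the matrix `I - 𝟙/J` is the
identity, and the term `k = 1` bounds the remaining scalar from below by `8π² c_*²/J`.
-/

theorem sum_norm_sub_mean_sq {ι E : Type*} [Fintype ι] [NormedAddCommGroup E]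
    [InnerProductSpace ℝ E] (z : ι → E) :
    ∑ j, ‖z j - (Fintype.card ι : ℝ)⁻¹ • ∑ j', z j'‖ ^ 2
      = ∑ j, ‖z j‖ ^ 2 - Fintype.card ι * ‖(Fintype.card ι : ℝ)⁻¹ • ∑ j', z j'‖ ^ 2 := by
  set m := (Fintype.card ι : ℝ)⁻¹ • ∑ j', z j'
  have hsum : ∑ j, z j = (Fintype.card ι : ℝ) • m := by
    rcases isEmpty_or_nonempty ι with h | h
    · simp
    · simp [m, smul_smul]
  calc ∑ j, ‖z j - m‖ ^ 2 = ∑ j, (‖z j‖ ^ 2 - 2 * inner ℝ (z j) m + ‖m‖ ^ 2) := by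
        simp only [norm_sub_sq_real]
    _ = ∑ j, ‖z j‖ ^ 2 - 2 * inner ℝ (∑ j, z j) m + Fintype.card ι * ‖m‖ ^ 2 := by
        rw [sum_add_distrib, sum_sub_distrib, ← mul_sum, sum_inner]
        simp
    _ = ∑ j, ‖z j‖ ^ 2 - Fintype.card ι * ‖m‖ ^ 2 := by
        rw [hsum, real_inner_smul_left, real_inner_self_eq_norm_sq]
        ring

theorem inner_exp_mul_I (x y : ℝ) :
    inner ℝ (Complex.exp (x * Complex.I)) (Complex.exp (y * Complex.I)) = cos (y - x) := by
  rw [Complex.inner, ← Complex.exp_conj, ← Complex.exp_add]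
  simp only [map_mul, Complex.conj_ofReal, Complex.conj_I]
  rw [← Complex.exp_ofReal_mul_I_re]
  congr 2
  push_cast
  ring

theorem norm_sum_exp_mul_I_sq {ι : Type*} [Fintype ι] (ψ : ι → ℝ) :
    ‖∑ j, Complex.exp (ψ j * Complex.I)‖ ^ 2 = ∑ a, ∑ b, cos (ψ a - ψ b) := by
  simp only [← real_inner_self_eq_norm_sq, sum_inner, inner_sum, inner_exp_mul_I]

theorem inv_card_mul_sum_norm_sub_mean_sq {ι : Type*} [Fintype ι] [Nonempty ι] (c : ℂ)
    (ψ : ι → ℝ) :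
    (Fintype.card ι : ℝ)⁻¹ * ∑ j, ‖c * Complex.exp (ψ j * Complex.I)
        - (Fintype.card ι : ℂ)⁻¹ * ∑ j', c * Complex.exp (ψ j' * Complex.I)‖ ^ 2
      = ‖c‖ ^ 2 - ‖c‖ ^ 2 / (Fintype.card ι : ℝ) ^ 2 * ∑ a, ∑ b, cos (ψ a - ψ b) := by
  have hn : (Fintype.card ι : ℝ) ≠ 0 := Nat.cast_ne_zero.mpr Fintype.card_ne_zero
  have hmean : (Fintype.card ι : ℂ)⁻¹ * ∑ j', c * Complex.exp (ψ j' * Complex.I)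
      = (Fintype.card ι : ℝ)⁻¹ • ∑ j', c * Complex.exp (ψ j' * Complex.I) := by
    rw [Complex.real_smul]
    push_cast
    rfl
  rw [hmean, sum_norm_sub_mean_sq]
  simp only [norm_mul, Complex.norm_exp_ofReal_mul_I, mul_one, norm_smul, ← mul_sum, mul_pow,
    norm_sum_exp_mul_I_sq, sum_const, card_univ, nsmul_eq_mul, norm_inv, Real.norm_natCast]
  field_simp

theorem eK_eq_exp_mul_I (k : ℤ) (x : ℝ) :
    eK k x = Complex.exp (((2 * π * k * x : ℝ) : ℂ) * Complex.I) := by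
  simp only [eK, twoPiI]
  push_cast
  ring_nf

def phaseGap {J : ℕ} (p : ℤ × Fin J × Fin J) : (Fin J → ℝ) →L[ℝ] ℝ :=
  (2 * π * p.1) • (ContinuousLinearMap.proj (R := ℝ) (φ := fun _ => ℝ) p.2.1
    - ContinuousLinearMap.proj p.2.2)

theorem phaseGap_apply {J : ℕ} (p : ℤ × Fin J × Fin J) (x : Fin J → ℝ) :
    phaseGap p x = 2 * π * p.1 * (x p.2.1 - x p.2.2) := by
  simp [phaseGap]

theorem Mpop_eq_sum_cos_phaseGap (f : ℝ → ℝ) (k0 : ℕ) {J : ℕ} (hJ : J ≠ 0)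
    (θstar : Fin J → ℝ) :
    Mpop f k0 J θstar = fun θ => ∑ k ∈ Icc (-(k0:ℤ)) k0, ‖fc f k‖ ^ 2
      + ∑ p ∈ Icc (-(k0:ℤ)) k0 ×ˢ univ, -(‖fc f p.1‖ ^ 2 / (J:ℝ) ^ 2)
          * cos (phaseGap p (θ - θstar)) := by
  have : NeZero J := ⟨hJ⟩
  ext θ
  rw [Mpop, sum_comm, mul_sum, sum_product, ← sum_add_distrib]
  refine sum_congr rfl fun k _ => ?_
  have h := inv_card_mul_sum_norm_sub_mean_sq (fc f k) fun j => 2 * π * k * (θ j - θstar j)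
  simp only [Fintype.card_fin] at h
  simp only [eK_eq_exp_mul_I]
  rw [h, Fintype.sum_prod_type, mul_sum, sub_eq_add_neg, ← sum_neg_distrib]
  simp only [phaseGap_apply, Pi.sub_apply, mul_sum, neg_mul, mul_sub, sum_neg_distrib]

section Hessian

variable {J : ℕ}

theorem hess_eq_of_hasFDerivAt {F : (Fin J → ℝ) → ℝ}
    {F' : (Fin J → ℝ) → (Fin J → ℝ) →L[ℝ] ℝ} {F'' : (Fin J → ℝ) →L[ℝ] (Fin J → ℝ) →L[ℝ] ℝ}
    {θ : Fin J → ℝ} (hF : ∀ x, HasFDerivAt F (F' x) x) (hF' : HasFDerivAt F' F'' θ)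
    (i j : Fin J) :
    hess F θ i j = F'' (Pi.single i 1) (Pi.single j 1) := by
  have hfderiv : fderiv ℝ F = F' := funext fun x => (hF x).fderiv
  simp only [hess, hfderiv]
  rw [(hF'.clm_apply (hasFDerivAt_const (Pi.single j 1) θ)).fderiv]
  simp

theorem hess_const_add (c : ℝ) (F : (Fin J → ℝ) → ℝ) (θ : Fin J → ℝ) (i j : Fin J) :
    hess (fun x => c + F x) θ i j = hess F θ i j := by
  simp only [hess, fderiv_const_add]

theorem hess_sum_mul_cos {ι : Type*} (s : Finset ι) (β : ι → ℝ)
    (L : ι → (Fin J → ℝ) →L[ℝ] ℝ) (c θ : Fin J → ℝ) (i j : Fin J) :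
    hess (fun x => ∑ n ∈ s, β n * cos (L n (x - c))) θ i j
      = -∑ n ∈ s, β n * cos (L n (θ - c)) * L n (Pi.single i 1) * L n (Pi.single j 1) := by
  have hL : ∀ n x, HasFDerivAt (fun y => L n (y - c)) (L n) x := fun n x => by
    simpa only [map_sub] using (L n).hasFDerivAt.sub_const (L n c)
  rw [hess_eq_of_hasFDerivAt (F' := fun x => ∑ n ∈ s, (β n * -sin (L n (x - c))) • L n)
    (fun x => HasFDerivAt.fun_sum fun n _ => ?_)
    (HasFDerivAt.fun_sum fun n _ => ((hL n θ).sin.neg.const_mul (β n)).smul_const (L n))]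
  · simp [mul_assoc]
  · exact ((hL n x).cos.const_mul (β n)).congr_fderiv (smul_smul _ _ _)

end Hessian

theorem sum_sum_sub_mul_sub {ι : Type*} [Fintype ι] (u v : ι → ℝ) :
    ∑ a, ∑ b, (u a - u b) * (v a - v b)
      = 2 * (Fintype.card ι * ∑ a, u a * v a - (∑ a, u a) * ∑ a, v a) := by
  simp only [sub_mul, mul_sub, sum_sub_distrib, sum_const, card_univ, nsmul_eq_mul, ← mul_sum,
    ← sum_mul]
  ring

theorem sum_sum_single_sub_mul_single_sub {J : ℕ} (i j : Fin J) :
    ∑ a, ∑ b, ((Pi.single i 1 : Fin J → ℝ) a - (Pi.single i 1 : Fin J → ℝ) b)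
        * ((Pi.single j 1 : Fin J → ℝ) a - (Pi.single j 1 : Fin J → ℝ) b)
      = 2 * (J * (if i = j then 1 else 0) - 1) := by
  rw [sum_sum_sub_mul_sub]
  rcases eq_or_ne i j with rfl | h
  · simp [Pi.single_apply]
  · simp [Pi.single_apply, h, h.symm]

theorem hess_Mpop_theta0 (f : ℝ → ℝ) (k0 : ℕ) {J : ℕ} (hJ : J ≠ 0) (θstar : Fin J → ℝ)
    (i j : Fin J) :
    hess (Mpop f k0 J θstar) (theta0 J θstar) i j
      = 8 * π ^ 2 / J * (∑ k ∈ Icc (-(k0:ℤ)) k0, (k:ℝ) ^ 2 * ‖fc f k‖ ^ 2)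
          * ((if i = j then 1 else 0) - (J:ℝ)⁻¹) := by
  have hgap : ∀ p, phaseGap p (theta0 J θstar - θstar) = 0 := fun p => by
    simp [phaseGap_apply, theta0]
  rw [Mpop_eq_sum_cos_phaseGap f k0 hJ, hess_const_add, hess_sum_mul_cos]
  simp only [hgap, cos_zero, mul_one, sum_product, Fintype.sum_prod_type, phaseGap_apply]
  have hk : ∀ k : ℤ, ∑ a, ∑ b, -(‖fc f k‖ ^ 2 / (J:ℝ) ^ 2)
        * (2 * π * k * ((Pi.single i 1 : Fin J → ℝ) a - (Pi.single i 1 : Fin J → ℝ) b))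
        * (2 * π * k * ((Pi.single j 1 : Fin J → ℝ) a - (Pi.single j 1 : Fin J → ℝ) b))
      = -(‖fc f k‖ ^ 2 / (J:ℝ) ^ 2) * (2 * π * k) ^ 2
          * (2 * (J * (if i = j then 1 else 0) - 1)) := by
    intro k
    rw [← sum_sum_single_sub_mul_single_sub, mul_sum]
    refine sum_congr rfl fun a _ => ?_
    rw [mul_sum]
    exact sum_congr rfl fun b _ => by ring
  simp only [hk, ← sum_neg_distrib, mul_sum, sum_mul]
  refine sum_congr rfl fun k _ => ?_
  field_simp
  ring

theorem sum_mul_centering_of_sum_eq_zero {ι : Type*} [Fintype ι] [DecidableEq ι] (r c : ℝ)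
    {v : ι → ℝ} (hv : ∑ j, v j = 0) (i : ι) :
    ∑ j, r * ((if i = j then 1 else 0) - c) * v j = r * v i := by
  simp [mul_sub, sub_mul, sum_sub_distrib, ← mul_sum, hv]

theorem population_criterion_hessian_general
    (f : ℝ → ℝ)
    (k0 J : ℕ) (hk0 : 1 ≤ k0) (hJ : 1 ≤ J) (θstar : Fin J → ℝ) :
    (∀ i j : Fin J,
      hess (Mpop f k0 J θstar) (theta0 J θstar) i j
        = (8 * Real.pi^2 / J) * (∑ k ∈ Finset.Icc (-(k0:ℤ)) (k0:ℤ), (k:ℝ)^2 * ‖fc f k‖^2)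
            * ((if i = j then (1:ℝ) else 0) - (J:ℝ)⁻¹)) ∧
    (∀ v : Fin J → ℝ, ∑ j, v j = 0 →
      Real.sqrt (∑ i, (∑ j, hess (Mpop f k0 J θstar) (theta0 J θstar) i j * v j) ^ 2)
        = (8 * Real.pi^2 / J) * (∑ k ∈ Finset.Icc (-(k0:ℤ)) (k0:ℤ), (k:ℝ)^2 * ‖fc f k‖^2)
            * Real.sqrt (∑ j, v j ^ 2)) ∧
    (∀ cstar : ℝ, 0 < cstar → cstar ≤ ‖fc f 1‖ →
      ∀ v : Fin J → ℝ, ∑ j, v j = 0 →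
        (64 * Real.pi^4 * cstar^4 / (J:ℝ)^2) * (∑ j, v j ^ 2)
          ≤ ∑ i, (∑ j, hess (Mpop f k0 J θstar) (theta0 J θstar) i j * v j) ^ 2) := by
  have hH := hess_Mpop_theta0 f k0 (Nat.one_le_iff_ne_zero.mp hJ) θstar
  set S := ∑ k ∈ Icc (-(k0:ℤ)) k0, (k:ℝ) ^ 2 * ‖fc f k‖ ^ 2
  have hcoef : 0 ≤ 8 * π ^ 2 / J * S := by positivity
  have hHv : ∀ v : Fin J → ℝ, ∑ j, v j = 0 →
      ∑ i, (∑ j, hess (Mpop f k0 J θstar) (theta0 J θstar) i j * v j) ^ 2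
        = (8 * π ^ 2 / J * S) ^ 2 * ∑ j, v j ^ 2 := fun v hv => by
    simp only [hH, sum_mul_centering_of_sum_eq_zero _ _ hv, mul_pow, mul_sum]
  refine ⟨hH, fun v hv => ?_, fun cstar hc hcle v hv => ?_⟩
  · rw [hHv v hv, sqrt_mul (sq_nonneg _), sqrt_sq hcoef]
  · have hone : (1:ℤ) ∈ Icc (-(k0:ℤ)) k0 := mem_Icc.mpr ⟨by omega, by omega⟩
    have hc1 : ‖fc f 1‖ ^ 2 ≤ S := by
      have h := single_le_sum (f := fun k : ℤ => (k:ℝ) ^ 2 * ‖fc f k‖ ^ 2)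
        (fun k _ => by positivity) hone
      rwa [Int.cast_one, one_pow, one_mul] at h
    have hcS : cstar ^ 2 ≤ S := (pow_le_pow_left₀ hc.le hcle 2).trans hc1
    rw [hHv v hv]
    gcongr
    calc 64 * π ^ 4 * cstar ^ 4 / (J:ℝ) ^ 2 = (8 * π ^ 2 / J * cstar ^ 2) ^ 2 := by ring
      _ ≤ (8 * π ^ 2 / J * S) ^ 2 := by gcongr

/-- **Lemma (explicit Hessian of the population criterion at `θ⁰`).**
`∇²M(θ⁰) = (8π²/J) (∑_{|k|≤k₀} k²|c_k|²) (I_J - (1/J)𝟙_J)`; consequently for every `v`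
with `∑_j v_j = 0`, `‖∇²M(θ⁰)v‖ = (8π²/J)(∑_{|k|≤k₀} k²|c_k|²)‖v‖`, and if `|c₁| ≥ c_* > 0`
then `‖∇²M(θ⁰)v‖² ≥ (64π⁴c_*⁴/J²)‖v‖²`. -/
theorem population_criterion_hessian
    (f : ℝ → ℝ) (hper : Function.Periodic f 1) (hmeas : Measurable f)
    (hL2 : MemLp f 2 (volume.restrict (Set.Ioc (0:ℝ) 1)))
    (k0 J : ℕ) (hk0 : 1 ≤ k0) (hJ : 1 ≤ J) (θstar : Fin J → ℝ) :
    (∀ i j : Fin J,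
      hess (Mpop f k0 J θstar) (theta0 J θstar) i j
        = (8 * Real.pi^2 / J) * (∑ k ∈ Finset.Icc (-(k0:ℤ)) (k0:ℤ), (k:ℝ)^2 * ‖fc f k‖^2)
            * ((if i = j then (1:ℝ) else 0) - (J:ℝ)⁻¹)) ∧
    (∀ v : Fin J → ℝ, ∑ j, v j = 0 →
      Real.sqrt (∑ i, (∑ j, hess (Mpop f k0 J θstar) (theta0 J θstar) i j * v j) ^ 2)
        = (8 * Real.pi^2 / J) * (∑ k ∈ Finset.Icc (-(k0:ℤ)) (k0:ℤ), (k:ℝ)^2 * ‖fc f k‖^2)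
            * Real.sqrt (∑ j, v j ^ 2)) ∧
    (∀ cstar : ℝ, 0 < cstar → cstar ≤ ‖fc f 1‖ →
      ∀ v : Fin J → ℝ, ∑ j, v j = 0 →
        (64 * Real.pi^4 * cstar^4 / (J:ℝ)^2) * (∑ j, v j ^ 2)
          ≤ ∑ i, (∑ j, hess (Mpop f k0 J θstar) (theta0 J θstar) i j * v j) ^ 2) :=
  population_criterion_hessian_general f k0 J hk0 hJ θstar
end
end
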